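/- arXiv:2107.02748 — 2 statements merged into one kernel-verified Lean document; each statement's English description precedes it below -/
import Mathlib

section
/- Let φ be a 3-CNF formula on n variables, let r ≥ 1 and q ≥ 1 be integers, and let ℓ_1, …, ℓ_r be literals of pairwise distinct variables. Define F_0 = φ and, for 1 ≤ i ≤ r, let F_i be obtained from F_{i−1} by deleting every clause containing ℓ_i and removing every occurrence of ¬ℓ_i from the remaining clauses. Suppose that for each 1 ≤ i ≤ r, the formula F_{i−1} contains a 1-sunflower of size at least q with core {ℓ_i}, none of whose clauses contains the variable of ℓ_i except in the core literal ℓ_i itself. Then the number of assignments that satisfy φ and set at least one of ℓ_1, …, ℓ_r false is at most r · (3/4)^q · 2^n. -/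
/-- A literal over `n` Boolean variables: a variable together with a polarity. -/
abbrev Lit (n : ℕ) := Fin n × Bool

/-- A clause: a finite set of literals (interpreted as their disjunction). -/
abbrev Clause (n : ℕ) := Finset (Lit n)

/-- A CNF formula: a finite set of clauses (interpreted as their conjunction). -/
abbrev Cnf (n : ℕ) := Finset (Clause n)

/-- An assignment satisfies a clause if some literal of the clause is true. -/
def clauseSat {n : ℕ} (A : Fin n → Bool) (C : Clause n) : Prop :=
  ∃ l ∈ C, A l.1 = l.2

/-- An assignment satisfies a CNF if it satisfies every clause. -/
def cnfSat {n : ℕ} (A : Fin n → Bool) (F : Cnf n) : Prop :=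
  ∀ C ∈ F, clauseSat A C

/-- `numSat F` is the number of satisfying assignments of `F` (out of `2^n`). -/
noncomputable def numSat {n : ℕ} (F : Cnf n) : ℕ :=
  Nat.card {A : Fin n → Bool // cnfSat A F}

/-- The set of variables occurring in a clause. -/
def clVars {n : ℕ} (C : Clause n) : Finset (Fin n) := C.image Prod.fst

/-- A finite set of literals has pairwise distinct variables. -/
def distinctVars {n : ℕ} (C : Clause n) : Prop :=
  ∀ l ∈ C, ∀ l' ∈ C, l.1 = l'.1 → l = l'

/-- A set of clauses is variable-disjoint if no two distinct clauses share a variable. -/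
def varDisjoint {n : ℕ} (S : Finset (Clause n)) : Prop :=
  ∀ C ∈ S, ∀ C' ∈ S, C ≠ C' → Disjoint (clVars C) (clVars C')

/-- `S` is a `w`-sunflower: there is a core `L` of `w` distinct literals contained in every
clause, and removing the core from each clause yields a variable-disjoint set. -/
def isSunflower {n : ℕ} (S : Finset (Clause n)) (w : ℕ) : Prop :=
  ∃ L : Finset (Lit n), L.card = w ∧ (∀ C ∈ S, L ⊆ C) ∧
    ∀ C ∈ S, ∀ C' ∈ S, C ≠ C' → Disjoint (clVars (C \ L)) (clVars (C' \ L))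

/-- A set of literals is consistent if it never contains both a variable and its negation. -/
def consistentLits {n : ℕ} (L : Finset (Lit n)) : Prop :=
  ∀ x : Fin n, ¬((x, true) ∈ L ∧ (x, false) ∈ L)

/-- `setTrue F l` asserts the literal `l` in `F`: delete every clause containing `l` and
remove every occurrence of `¬l` from the remaining clauses. -/
def setTrue {n : ℕ} (F : Cnf n) (l : Lit n) : Cnf n :=
  (F.filter (fun C => l ∉ C)).image (fun C => C.erase (l.1, !l.2))

/-!
An assignment counted on the left sets some `ℓ i` false; for the least such `i` it sets all
earlier literals true, so it satisfies `Fseq i.castSucc`. Falsifying `ℓ i`, it then satisfies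
every petal of the `i`-th sunflower with `ℓ i` removed. These petals are at least `q`
variable-disjoint clauses of width at most two on distinct variables, and each of them,
independently of the others, excludes at least a quarter of the assignments; so each `i`
contributes at most `(3/4)^q · 2^n` assignments.
-/

open Finset

section

variable {n : ℕ}

instance (A : Fin n → Bool) (C : Clause n) : Decidable (clauseSat A C) :=
  inferInstanceAs (Decidable (∃ l ∈ C, A l.1 = l.2))

instance (A : Fin n → Bool) (F : Cnf n) : Decidable (cnfSat A F) :=
  inferInstanceAs (Decidable (∀ C ∈ F, clauseSat A C))

lemma numSat_eq_card (F : Cnf n) : numSat F = #{A | cnfSat A F} := by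
  rw [numSat, Nat.card_eq_fintype_card, Fintype.card_subtype]

lemma distinctVars.mono {C C' : Clause n} (hd : distinctVars C) (h : C' ⊆ C) :
    distinctVars C' := fun l hl l' hl' => hd l (h hl) l' (h hl')

lemma cnfSat_insert {A : Fin n → Bool} {C : Clause n} {F : Cnf n} :
    cnfSat A (insert C F) ↔ clauseSat A C ∧ cnfSat A F :=
  forall_mem_insert _ _ _

def falsify (C : Clause n) (A : Fin n → Bool) : Fin n → Bool :=
  fun x => if (x, A x) ∈ C then !A x else A x

lemma falsify_of_notMem_clVars {C : Clause n} (A : Fin n → Bool) {x : Fin n}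
    (hx : x ∉ clVars C) : falsify C A x = A x :=
  if_neg fun h => hx (mem_image_of_mem Prod.fst h)

lemma not_clauseSat_falsify {C : Clause n} (hC : distinctVars C) (A : Fin n → Bool) :
    ¬ clauseSat (falsify C A) C := by
  rintro ⟨⟨x, b⟩, hl, hsat⟩
  by_cases hA : A x = b
  · subst hA
    simp [falsify, hl] at hsat
  · have hnot : (x, A x) ∉ C := fun h => hA (Prod.ext_iff.mp (hC _ h _ hl rfl)).2
    simp only [falsify, hnot, if_false] at hsat
    exact hA hsat

lemma clauseSat_falsify_iff {C C' : Clause n} (h : Disjoint (clVars C) (clVars C'))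
    (A : Fin n → Bool) : clauseSat (falsify C A) C' ↔ clauseSat A C' := by
  refine exists_congr fun l => and_congr_right fun hl => ?_
  rw [falsify_of_notMem_clVars A (disjoint_right.mp h (mem_image_of_mem Prod.fst hl))]

/-- A satisfying assignment `A` is determined by `falsify C A` and by its values on the at most
two variables of `C`, which avoid the one falsifying pattern: so at most three satisfying
assignments correspond to each falsifying one. -/
lemma four_mul_card_filter_clauseSat_le {C : Clause n} (h2 : C.card ≤ 2) (hC : distinctVars C)
    {t : Finset (Fin n → Bool)} (ht : ∀ A ∈ t, falsify C A ∈ t) :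
    4 * #{A ∈ t | clauseSat A C} ≤ 3 * #t := by
  set s := {A ∈ t | clauseSat A C}
  set u := {A ∈ t | ¬ clauseSat A C}
  have hsu : #s + #u = #t := card_filter_add_card_filter_not _
  let pattern : C → Bool := fun l => !l.1.2
  have hinj : Set.InjOn (fun A => (falsify C A, fun l : C => A l.1.1)) s := by
    intro A _ A' _ h
    obtain ⟨hf, hr⟩ := Prod.ext_iff.mp h
    funext x
    by_cases hx : x ∈ clVars C
    · obtain ⟨l, hl, rfl⟩ := mem_image.mp hx
      exact congrFun hr ⟨l, hl⟩
    · simpa only [falsify_of_notMem_clVars _ hx] using congrFun hf x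
  have hmaps : ∀ A ∈ s, (falsify C A, fun l : C => A l.1.1) ∈ u ×ˢ univ.erase pattern := by
    intro A hA
    obtain ⟨hAt, hsat⟩ := mem_filter.mp hA
    refine mem_product.mpr ⟨mem_filter.mpr ⟨ht A hAt, not_clauseSat_falsify hC A⟩,
      mem_erase.mpr ⟨fun hp => ?_, mem_univ _⟩⟩
    obtain ⟨l, hl, hAl⟩ := hsat
    simpa [pattern, hAl] using congrFun hp ⟨l, hl⟩
  have hsu3 : #s ≤ 3 * #u :=
    calc #s ≤ #(u ×ˢ (univ.erase pattern)) := card_le_card_of_injOn _ (fun A hA => hmaps A hA) hinj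
      _ = #u * (2 ^ C.card - 1) := by simp [card_erase_of_mem]
      _ ≤ #u * 3 := Nat.mul_le_mul_left _ (by
          have : 2 ^ C.card ≤ 2 ^ 2 := Nat.pow_le_pow_right (by norm_num) h2
          omega)
      _ = 3 * #u := mul_comm _ _
  omega

lemma numSat_insert_le {C : Clause n} {F : Cnf n} (h2 : C.card ≤ 2) (hC : distinctVars C)
    (hdisj : ∀ C' ∈ F, Disjoint (clVars C) (clVars C')) :
    (numSat (insert C F) : ℝ) ≤ 3 / 4 * numSat F := by
  have hfilter : ({A | cnfSat A (insert C F)} : Finset (Fin n → Bool)) =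
      ({A ∈ {A | cnfSat A F} | clauseSat A C} : Finset (Fin n → Bool)) := by
    ext A
    simp only [mem_filter, mem_univ, true_and, cnfSat_insert, and_comm]
  have key := four_mul_card_filter_clauseSat_le (t := {A | cnfSat A F}) h2 hC fun A hA => by
    simp only [mem_filter, mem_univ, true_and] at hA ⊢
    exact fun C' hC' => (clauseSat_falsify_iff (hdisj C' hC') A).mpr (hA C' hC')
  rw [numSat_eq_card, numSat_eq_card, hfilter]
  have : (4 : ℝ) * #{A ∈ {A | cnfSat A F} | clauseSat A C} ≤ 3 * #{A | cnfSat A F} := by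
    exact_mod_cast key
  linarith

lemma varDisjoint.mono {S T : Cnf n} (h : varDisjoint S) (hTS : T ⊆ S) : varDisjoint T :=
  fun C hC C' hC' hne => h C (hTS hC) C' (hTS hC') hne

lemma numSat_le_of_varDisjoint {S : Cnf n} (h2 : ∀ C ∈ S, C.card ≤ 2)
    (hdv : ∀ C ∈ S, distinctVars C) (hS : varDisjoint S) :
    (numSat S : ℝ) ≤ (3 / 4) ^ S.card * 2 ^ n := by
  induction S using Finset.induction_on with
  | empty => simp [numSat_eq_card, cnfSat]
  | @insert C S hCS ih =>
    have hdisj : ∀ C' ∈ S, Disjoint (clVars C) (clVars C') := fun C' hC' =>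
      hS C (mem_insert_self C S) C' (mem_insert_of_mem hC') (ne_of_mem_of_not_mem hC' hCS).symm
    have ih' := ih (fun C hC => h2 C (mem_insert_of_mem hC))
      (fun C hC => hdv C (mem_insert_of_mem hC)) (hS.mono (subset_insert C S))
    calc (numSat (insert C S) : ℝ)
        ≤ 3 / 4 * numSat S :=
          numSat_insert_le (h2 C (mem_insert_self C S)) (hdv C (mem_insert_self C S)) hdisj
      _ ≤ 3 / 4 * ((3 / 4) ^ S.card * 2 ^ n) := by gcongr
      _ = (3 / 4) ^ (insert C S).card * 2 ^ n := by rw [card_insert_of_notMem hCS, pow_succ]; ring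

lemma cnfSat_image_erase {A : Fin n → Bool} {F : Cnf n} (hA : cnfSat A F) {l : Lit n}
    (hl : A l.1 ≠ l.2) : cnfSat A (F.image fun C => C.erase l) := by
  simp only [cnfSat, forall_mem_image]
  intro C hC
  obtain ⟨m, hm, hAm⟩ := hA C hC
  exact ⟨m, mem_erase.mpr ⟨by rintro rfl; exact hl hAm, hm⟩, hAm⟩

lemma card_sat_falsifying_core_le {F S : Cnf n} {l : Lit n} {q : ℕ} (hSF : S ⊆ F)
    (hq : q ≤ S.card) (h3 : ∀ C ∈ S, C.card ≤ 3) (hdv : ∀ C ∈ S, distinctVars C)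
    (hcore : ∀ C ∈ S, l ∈ C)
    (hpetals : ∀ C ∈ S, ∀ C' ∈ S, C ≠ C' → Disjoint (clVars (C.erase l)) (clVars (C'.erase l))) :
    (#{A | A l.1 ≠ l.2 ∧ cnfSat A F} : ℝ) ≤ (3 / 4) ^ q * 2 ^ n := by
  set P := S.image fun C => C.erase l
  have hcardP : P.card = S.card := card_image_of_injOn fun C hC C' hC' =>
    erase_injOn' l (hcore C hC) (hcore C' hC')
  have hP : (numSat P : ℝ) ≤ (3 / 4) ^ P.card * 2 ^ n := by
    refine numSat_le_of_varDisjoint ?_ ?_ ?_ <;> simp only [P, forall_mem_image]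
    · intro C hC
      rw [card_erase_of_mem (hcore C hC)]
      exact Nat.sub_le_of_le_add (h3 C hC)
    · exact fun C hC => (hdv C hC).mono (erase_subset l C)
    · simp only [varDisjoint, forall_mem_image]
      exact fun C hC C' hC' hne => hpetals C hC C' hC' fun h => hne (h ▸ rfl)
  have hsub : ({A | A l.1 ≠ l.2 ∧ cnfSat A F} : Finset (Fin n → Bool)) ⊆
      ({A | cnfSat A P} : Finset (Fin n → Bool)) := by
    intro A hA
    simp only [mem_filter, mem_univ, true_and] at hA ⊢
    exact cnfSat_image_erase (fun C hC => hA.2 C (hSF hC)) hA.1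
  calc (#{A | A l.1 ≠ l.2 ∧ cnfSat A F} : ℝ)
      ≤ numSat P := by rw [numSat_eq_card]; exact_mod_cast card_le_card hsub
    _ ≤ (3 / 4) ^ P.card * 2 ^ n := hP
    _ ≤ (3 / 4) ^ q * 2 ^ n := by
      rw [hcardP]
      exact mul_le_mul_of_nonneg_right (pow_le_pow_of_le_one (by norm_num) (by norm_num) hq)
        (by positivity)

lemma exists_superset_of_mem_setTrue {F : Cnf n} {l : Lit n} {C : Clause n}
    (hC : C ∈ setTrue F l) : ∃ C₀ ∈ F, C ⊆ C₀ := by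
  obtain ⟨C₀, hC₀, rfl⟩ := mem_image.mp hC
  exact ⟨C₀, (mem_filter.mp hC₀).1, erase_subset _ _⟩

lemma cnfSat_setTrue {F : Cnf n} {l : Lit n} {A : Fin n → Bool} (hA : cnfSat A F)
    (hl : A l.1 = l.2) : cnfSat A (setTrue F l) := by
  intro C hC
  obtain ⟨C₀, hC₀, rfl⟩ := mem_image.mp hC
  obtain ⟨m, hm, hAm⟩ := hA C₀ (mem_filter.mp hC₀).1
  refine ⟨m, mem_erase.mpr ⟨?_, hm⟩, hAm⟩
  rintro rfl
  simp [hl] at hAm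

section Iterate

variable {r : ℕ} {ℓ : Fin r → Lit n} {F : Fin (r + 1) → Cnf n}

lemma exists_superset_of_mem_iterate (hstep : ∀ i : Fin r, F i.succ = setTrue (F i.castSucc) (ℓ i))
    (k : Fin (r + 1)) : ∀ C ∈ F k, ∃ C₀ ∈ F 0, C ⊆ C₀ := by
  induction k using Fin.induction with
  | zero => exact fun C hC => ⟨C, hC, subset_rfl⟩
  | succ i ih =>
    intro C hC
    rw [hstep i] at hC
    obtain ⟨C₁, hC₁, hCC₁⟩ := exists_superset_of_mem_setTrue hC
    obtain ⟨C₀, hC₀, hC₁C₀⟩ := ih C₁ hC₁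
    exact ⟨C₀, hC₀, hCC₁.trans hC₁C₀⟩

lemma cnfSat_iterate (hstep : ∀ i : Fin r, F i.succ = setTrue (F i.castSucc) (ℓ i))
    {A : Fin n → Bool} (hA : cnfSat A (F 0)) (k : Fin (r + 1))
    (hk : ∀ j : Fin r, j.castSucc < k → A (ℓ j).1 = (ℓ j).2) : cnfSat A (F k) := by
  induction k using Fin.induction with
  | zero => exact hA
  | succ i ih =>
    rw [hstep i]
    exact cnfSat_setTrue (ih fun j hj => hk j (hj.trans Fin.castSucc_lt_succ))
      (hk i Fin.castSucc_lt_succ)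

lemma card_sat_exists_falsified_le_sum
    (hstep : ∀ i : Fin r, F i.succ = setTrue (F i.castSucc) (ℓ i)) :
    #{A | cnfSat A (F 0) ∧ ∃ i, A (ℓ i).1 ≠ (ℓ i).2}
      ≤ ∑ i, #{A | A (ℓ i).1 ≠ (ℓ i).2 ∧ cnfSat A (F i.castSucc)} := by
  refine (card_le_card fun A hA => ?_).trans card_biUnion_le
  simp only [mem_filter, mem_univ, true_and] at hA
  obtain ⟨i, hi⟩ := exists_minimal_of_wellFoundedLT _ hA.2
  refine mem_biUnion.mpr ⟨i, mem_univ i, mem_filter.mpr ⟨mem_univ A, hi.prop, ?_⟩⟩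
  refine cnfSat_iterate hstep hA.1 _ fun j hj => ?_
  by_contra hne
  exact hi.not_prop_of_lt (Fin.castSucc_lt_castSucc_iff.mp hj) hne

end Iterate

end

theorem stmt11_general (n r q : ℕ)
    (φ : Cnf n) (h3 : ∀ C ∈ φ, C.card ≤ 3) (hdv : ∀ C ∈ φ, distinctVars C)
    (ℓ : Fin r → Lit n)
    (Fseq : Fin (r + 1) → Cnf n) (h0 : Fseq 0 = φ)
    (hstep : ∀ i : Fin r, Fseq i.succ = setTrue (Fseq i.castSucc) (ℓ i))
    (hsun : ∀ i : Fin r, ∃ S ⊆ Fseq i.castSucc, q ≤ S.card ∧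
        (∀ C ∈ S, ℓ i ∈ C) ∧
        (∀ C ∈ S, ∀ l' ∈ C, l'.1 = (ℓ i).1 → l' = ℓ i) ∧
        (∀ C ∈ S, ∀ C' ∈ S, C ≠ C' →
          Disjoint (clVars (C.erase (ℓ i))) (clVars (C'.erase (ℓ i))))) :
    (Nat.card {A : Fin n → Bool //
        cnfSat A φ ∧ ∃ i : Fin r, A (ℓ i).1 ≠ (ℓ i).2} : ℝ)
      ≤ r * (3/4 : ℝ)^q * 2^n := by
  subst h0
  have hclause : ∀ k, ∀ C ∈ Fseq k, C.card ≤ 3 ∧ distinctVars C := fun k C hC => by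
    obtain ⟨C₀, hC₀, hCC₀⟩ := exists_superset_of_mem_iterate hstep k C hC
    exact ⟨(card_le_card hCC₀).trans (h3 C₀ hC₀), (hdv C₀ hC₀).mono hCC₀⟩
  have hsunflower : ∀ i : Fin r, (#{A | A (ℓ i).1 ≠ (ℓ i).2 ∧ cnfSat A (Fseq i.castSucc)} : ℝ)
      ≤ (3 / 4) ^ q * 2 ^ n := fun i => by
    obtain ⟨S, hSF, hq, hcore, -, hpetals⟩ := hsun i
    exact card_sat_falsifying_core_le hSF hq (fun C hC => (hclause _ C (hSF hC)).1)
      (fun C hC => (hclause _ C (hSF hC)).2) hcore hpetals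
  rw [Nat.card_eq_fintype_card, Fintype.card_subtype]
  calc (#{A | cnfSat A (Fseq 0) ∧ ∃ i, A (ℓ i).1 ≠ (ℓ i).2} : ℝ)
      ≤ ∑ i, (#{A | A (ℓ i).1 ≠ (ℓ i).2 ∧ cnfSat A (Fseq i.castSucc)} : ℝ) := by
        exact_mod_cast card_sat_exists_falsified_le_sum hstep
    _ ≤ ∑ _i : Fin r, (3 / 4 : ℝ) ^ q * 2 ^ n := sum_le_sum fun i _ => hsunflower i
    _ = r * (3 / 4 : ℝ) ^ q * 2 ^ n := by simp [mul_assoc]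

/-- If a 3-CNF `φ` admits a sequence of literals `ℓ_1, …, ℓ_r` on distinct variables, where
each `F_{i-1}` (obtained by successively asserting `ℓ_1, …, ℓ_{i-1}`) contains a 1-sunflower
of size at least `q` with core `{ℓ_i}` whose clauses contain the variable of `ℓ_i` only as
the core literal, then at most `r·(3/4)^q·2^n` assignments satisfy `φ` while setting some
`ℓ_i` false. -/
theorem stmt11 (n r q : ℕ) (hr : 1 ≤ r) (hq : 1 ≤ q)
    (φ : Cnf n) (h3 : ∀ C ∈ φ, C.card ≤ 3) (hdv : ∀ C ∈ φ, distinctVars C)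
    (ℓ : Fin r → Lit n) (hinj : Function.Injective (fun i => (ℓ i).1))
    (Fseq : Fin (r + 1) → Cnf n) (h0 : Fseq 0 = φ)
    (hstep : ∀ i : Fin r, Fseq i.succ = setTrue (Fseq i.castSucc) (ℓ i))
    (hsun : ∀ i : Fin r, ∃ S ⊆ Fseq i.castSucc, q ≤ S.card ∧
        (∀ C ∈ S, ℓ i ∈ C) ∧
        (∀ C ∈ S, ∀ l' ∈ C, l'.1 = (ℓ i).1 → l' = ℓ i) ∧
        (∀ C ∈ S, ∀ C' ∈ S, C ≠ C' →
          Disjoint (clVars (C.erase (ℓ i))) (clVars (C'.erase (ℓ i))))) :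
    (Nat.card {A : Fin n → Bool //
        cnfSat A φ ∧ ∃ i : Fin r, A (ℓ i).1 ≠ (ℓ i).2} : ℝ)
      ≤ r * (3/4 : ℝ)^q * 2^n :=
  stmt11_general n r q φ h3 hdv ℓ Fseq h0 hstep hsun
end

section
/- Let w ≥ 2 and let Q_1, …, Q_{w−1} be positive integers. Let ψ be a CNF formula with pairwise distinct clauses, each of width exactly w, such that for every 1 ≤ v ≤ w−1, ψ contains no v-sunflower of size Q_v. Then every literal occurs in at most (w−1)! · 2^{w−1} · ∏_{v=1}^{w−1} (Q_v − 1) clauses of ψ. -/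
/-!
Induction on the size of a common core `L`. Among the clauses containing `L`, a maximal
subfamily whose petals `C \ L` are variable-disjoint is an `|L|`-sunflower, so it has fewer than
`Q |L|` members and its petals cover at most `(Q |L| - 1) (w - |L|)` variables. By maximality
every clause containing `L` has a petal literal on one of these variables, i.e. contains one of
at most `2 (Q |L| - 1) (w - |L|)` cores of size `|L| + 1`. A core of size `w` lies in at most
one clause.
-/

open Finset

theorem Finset.exists_pairwiseDisjoint_subset_not_disjoint_biUnion {α β : Type*}
    [DecidableEq α] [DecidableEq β] (F : Finset α) (f : α → Finset β)
    (hf : ∀ a ∈ F, (f a).Nonempty) :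
    ∃ T ⊆ F, (T : Set α).PairwiseDisjoint f ∧ ∀ a ∈ F, ¬Disjoint (f a) (T.biUnion f) := by
  induction F using Finset.induction_on with
  | empty => exact ⟨∅, subset_refl _, by simp, by simp⟩
  | insert a F _ ih =>
    obtain ⟨T, hTF, hT, hmeet⟩ := ih fun b hb => hf b (mem_insert_of_mem hb)
    by_cases ha : Disjoint (f a) (T.biUnion f)
    · refine ⟨insert a T, insert_subset_insert a hTF, ?_, ?_⟩
      · rw [coe_insert]
        refine hT.insert fun b hb _ => ha.mono_right (subset_biUnion_of_mem f hb)
      · have hmono : T.biUnion f ⊆ (insert a T).biUnion f :=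
          biUnion_subset_biUnion_of_subset_left f (subset_insert a T)
        simp only [mem_insert, forall_eq_or_imp]
        refine ⟨fun h => ?_, fun b hb h => hmeet b hb (h.mono_right hmono)⟩
        have := disjoint_self.mp (h.mono_right (subset_biUnion_of_mem f (mem_insert_self a T)))
        exact (hf a (mem_insert_self a F)).ne_empty this
    · refine ⟨T, hTF.trans (subset_insert a F), hT, ?_⟩
      simp only [mem_insert, forall_eq_or_imp]
      exact ⟨ha, hmeet⟩

variable {n : ℕ}

theorem isSunflower.mono {S T : Finset (Clause n)} {v : ℕ} (hS : isSunflower S v) (hTS : T ⊆ S) :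
    isSunflower T v := by
  obtain ⟨L, hL, hcore, hpetals⟩ := hS
  exact ⟨L, hL, fun C hC => hcore C (hTS hC),
    fun C hC C' hC' hne => hpetals C (hTS hC) C' (hTS hC') hne⟩

theorem card_lt_of_isSunflower {ψ S : Finset (Clause n)} {v q : ℕ}
    (hnosun : ¬∃ S ⊆ ψ, S.card = q ∧ isSunflower S v) (hSψ : S ⊆ ψ) (hS : isSunflower S v) :
    S.card < q := by
  by_contra! hq
  obtain ⟨S', hS'S, hS'⟩ := exists_subset_card_eq hq
  exact hnosun ⟨S', hS'S.trans hSψ, hS', hS.mono hS'S⟩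

theorem isSunflower_of_pairwiseDisjoint {S : Finset (Clause n)} {L : Clause n}
    (hcore : ∀ C ∈ S, L ⊆ C) (hpetals : (S : Set (Clause n)).PairwiseDisjoint (clVars <| · \ L)) :
    isSunflower S L.card :=
  ⟨L, rfl, hcore, fun _ hC _ hC' hne => hpetals hC hC' hne⟩

theorem notMem_of_mem_clVars_sdiff {C L : Clause n} (hC : distinctVars C) (hLC : L ⊆ C)
    {x : Fin n} (hx : x ∈ clVars (C \ L)) (b : Bool) : (x, b) ∉ L := by
  obtain ⟨l, hl, rfl⟩ := mem_image.mp hx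
  rw [mem_sdiff] at hl
  intro hxb
  rw [hC l hl.1 _ (hLC hxb) rfl] at hl
  exact hl.2 hxb

theorem card_filter_superset_le_sum (ψ : Cnf n) (L : Clause n) (V : Finset (Fin n))
    (hV : ∀ C ∈ ψ, L ⊆ C → ∃ x ∈ V, x ∈ clVars (C \ L)) :
    (ψ.filter (L ⊆ ·)).card ≤ ∑ x ∈ V, ∑ b : Bool, (ψ.filter (insert (x, b) L ⊆ ·)).card := by
  calc (ψ.filter (L ⊆ ·)).card
      ≤ (V.biUnion fun x => univ.biUnion fun b => ψ.filter (insert (x, b) L ⊆ ·)).card := by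
        refine card_le_card fun C hC => ?_
        obtain ⟨hCψ, hLC⟩ := mem_filter.mp hC
        obtain ⟨x, hxV, hx⟩ := hV C hCψ hLC
        obtain ⟨l, hl, rfl⟩ := mem_image.mp hx
        simp only [mem_biUnion, mem_univ, true_and, mem_filter, insert_subset_iff]
        exact ⟨l.1, hxV, l.2, hCψ, (mem_sdiff.mp hl).1, hLC⟩
    _ ≤ ∑ x ∈ V, (univ.biUnion fun b => ψ.filter (insert (x, b) L ⊆ ·)).card := card_biUnion_le
    _ ≤ _ := sum_le_sum fun _ _ => card_biUnion_le

theorem card_filter_superset_le_of_succ {ψ : Cnf n} {w q B : ℕ} {L : Clause n}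
    (hwidth : ∀ C ∈ ψ, C.card = w) (hdv : ∀ C ∈ ψ, distinctVars C) (hLw : L.card < w)
    (hnosun : ¬∃ S ⊆ ψ, S.card = q ∧ isSunflower S L.card)
    (hB : ∀ L' : Clause n, L'.card = L.card + 1 → (ψ.filter (L' ⊆ ·)).card ≤ B) :
    (ψ.filter (L ⊆ ·)).card ≤ (q - 1) * (w - L.card) * 2 * B := by
  set F := ψ.filter (L ⊆ ·)
  have hpetal_card : ∀ C ∈ F, (C \ L).card = w - L.card := fun C hC => by
    obtain ⟨hCψ, hLC⟩ := mem_filter.mp hC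
    rw [card_sdiff_of_subset hLC, hwidth C hCψ]
  obtain ⟨T, hTF, hT, hmeet⟩ := exists_pairwiseDisjoint_subset_not_disjoint_biUnion F
    (clVars <| · \ L) fun C hC => (card_pos.mp (by rw [hpetal_card C hC]; omega)).image _
  have hTq : T.card ≤ q - 1 := by
    have := card_lt_of_isSunflower hnosun (hTF.trans (filter_subset _ ψ))
      (isSunflower_of_pairwiseDisjoint (fun C hC => (mem_filter.mp (hTF hC)).2) hT)
    omega
  set V := T.biUnion (clVars <| · \ L)
  have hV : V.card ≤ (q - 1) * (w - L.card) := calc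
    V.card ≤ T.card * (w - L.card) := card_biUnion_le_card_mul _ _ _ fun C hC =>
        card_image_le.trans (hpetal_card C (hTF hC)).le
    _ ≤ (q - 1) * (w - L.card) := Nat.mul_le_mul_right _ hTq
  have hfresh : ∀ x ∈ V, ∀ b, (insert (x, b) L).card = L.card + 1 := fun x hx b => by
    obtain ⟨C, hC, hxC⟩ := mem_biUnion.mp hx
    obtain ⟨hCψ, hLC⟩ := mem_filter.mp (hTF hC)
    exact card_insert_of_notMem (notMem_of_mem_clVars_sdiff (hdv C hCψ) hLC hxC b)
  calc F.card
      ≤ ∑ x ∈ V, ∑ b : Bool, (ψ.filter (insert (x, b) L ⊆ ·)).card :=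
        card_filter_superset_le_sum ψ L V fun C hCψ hLC => by
          obtain ⟨x, hxC, hxV⟩ := not_disjoint_iff.mp (hmeet C (mem_filter.mpr ⟨hCψ, hLC⟩))
          exact ⟨x, hxV, hxC⟩
    _ ≤ ∑ _x ∈ V, ∑ _b : Bool, B :=
        sum_le_sum fun x hx => sum_le_sum fun b _ => hB _ (hfresh x hx b)
    _ = V.card * 2 * B := by simp [mul_assoc]
    _ ≤ (q - 1) * (w - L.card) * 2 * B := by gcongr

theorem card_filter_superset_le {ψ : Cnf n} {w : ℕ} {Q : ℕ → ℕ}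
    (hwidth : ∀ C ∈ ψ, C.card = w) (hdv : ∀ C ∈ ψ, distinctVars C)
    (hnosun : ∀ v, 1 ≤ v → v ≤ w - 1 → ¬∃ S ⊆ ψ, S.card = Q v ∧ isSunflower S v) (k : ℕ) :
    ∀ L : Clause n, 1 ≤ L.card → L.card + k = w →
      (ψ.filter (L ⊆ ·)).card ≤ k.factorial * 2 ^ k * ∏ v ∈ Ico L.card w, (Q v - 1) := by
  induction k with
  | zero =>
    intro L _ hLw
    calc (ψ.filter (L ⊆ ·)).card ≤ ({L} : Finset (Clause n)).card :=
          card_le_card fun C hC => by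
            obtain ⟨hCψ, hLC⟩ := mem_filter.mp hC
            rw [mem_singleton, eq_of_subset_of_card_le hLC (by rw [hwidth C hCψ]; omega)]
      _ = _ := by simp [← hLw]
  | succ k ih =>
    intro L hL1 hLw
    calc (ψ.filter (L ⊆ ·)).card
        ≤ (Q L.card - 1) * (w - L.card) * 2 *
            (k.factorial * 2 ^ k * ∏ v ∈ Ico (L.card + 1) w, (Q v - 1)) :=
          card_filter_superset_le_of_succ hwidth hdv (by omega) (hnosun _ hL1 (by omega))
            fun L' hL' => hL' ▸ ih L' (by omega) (by omega)
      _ = (k + 1).factorial * 2 ^ (k + 1) * ∏ v ∈ Ico L.card w, (Q v - 1) := by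
          rw [prod_eq_prod_Ico_succ_bot (show L.card < w by omega), Nat.factorial_succ,
            show w - L.card = k + 1 by omega]
          ring

theorem stmt12_general (n w : ℕ) (hw : 2 ≤ w) (Q : ℕ → ℕ)
    (ψ : Cnf n) (hwidth : ∀ C ∈ ψ, C.card = w) (hdv : ∀ C ∈ ψ, distinctVars C)
    (hnosun : ∀ v, 1 ≤ v → v ≤ w - 1 → ¬ ∃ S ⊆ ψ, S.card = Q v ∧ isSunflower S v)
    (l : Lit n) :
    (ψ.filter (fun C => l ∈ C)).card ≤
      (w - 1).factorial * 2^(w - 1) * ∏ v ∈ Finset.Icc 1 (w - 1), (Q v - 1) := by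
  simp_rw [← singleton_subset_iff]
  have hIco : Ico 1 w = Icc 1 (w - 1) := by ext; simp; omega
  simpa [hIco] using
    card_filter_superset_le hwidth hdv hnosun (w - 1) {l} (by simp) (by simp; omega)

/-- Bounded repetition: if `ψ` consists of pairwise distinct clauses of width exactly `w ≥ 2`
and contains no `v`-sunflower of size `Q_v` for any `1 ≤ v ≤ w-1`, then every literal occurs
in at most `(w-1)!·2^{w-1}·∏_{v=1}^{w-1}(Q_v - 1)` clauses of `ψ`. -/
theorem stmt12 (n w : ℕ) (hw : 2 ≤ w) (Q : ℕ → ℕ)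
    (hQ : ∀ v, 1 ≤ v → v ≤ w - 1 → 0 < Q v)
    (ψ : Cnf n) (hwidth : ∀ C ∈ ψ, C.card = w) (hdv : ∀ C ∈ ψ, distinctVars C)
    (hnosun : ∀ v, 1 ≤ v → v ≤ w - 1 → ¬ ∃ S ⊆ ψ, S.card = Q v ∧ isSunflower S v)
    (l : Lit n) :
    (ψ.filter (fun C => l ∈ C)).card ≤
      (w - 1).factorial * 2^(w - 1) * ∏ v ∈ Finset.Icc 1 (w - 1), (Q v - 1) :=
  stmt12_general n w hw Q ψ hwidth hdv hnosun l
end
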